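/- arXiv:2307.01932 — 4 statements merged into one kernel-verified Lean document; each statement's English description precedes it below -/
import Mathlib

section
/- Let S be a tree structure on a dataset with responses y ∈ ℝⁿ, with splits partitioned as S = S^(1) ⊔ … ⊔ S^(p) according to the feature split on. Fix a feature k, let ŷ^(k) ∈ ℝⁿ be the orthogonal projection of y onto the linear span of the constant vector 1 together with the stump vectors {ψ_s : s ∈ S^(k)} (i.e., the fitted values of ordinary least squares regression of y on the stumps in S^(k) with an intercept), and let ȳ be the mean of y. If Σ_{i=1}^n (y_i − ȳ)² > 0, then MDI(k; S, y) / (n^{-1} Σ_{i=1}^n (y_i − ȳ)²) = 1 − Σ_{i=1}^n (y_i − ŷ_i^(k))² / Σ_{i=1}^n (y_i − ȳ)², i.e., the normalized MDI of feature k equals the R² value of the partial-model regression on feature k's stumps. -/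
open Finset MeasureTheory RealInnerProductSpace

/-- A split of a node into two disjoint nonempty children. -/
structure Split (n : ℕ) where
  left : Finset (Fin n)
  right : Finset (Fin n)
  left_nonempty : left.Nonempty
  right_nonempty : right.Nonempty
  disjoint : Disjoint left right

/-- The node being split is the union of the two children. -/
def Split.node {n : ℕ} (s : Split n) : Finset (Fin n) := s.left ∪ s.right

/-- Mean of the responses `y` over a subset `t` of samples. -/
noncomputable def meanOn {n : ℕ} (y : Fin n → ℝ) (t : Finset (Fin n)) : ℝ :=
  (∑ i ∈ t, y i) / t.card

/-- Impurity decrease of a split. -/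
noncomputable def impurityDecrease {n : ℕ} (s : Split n) (y : Fin n → ℝ) : ℝ :=
  (s.node.card : ℝ)⁻¹ *
    (∑ i ∈ s.node, (y i - meanOn y s.node) ^ 2
      - ∑ i ∈ s.left, (y i - meanOn y s.left) ^ 2
      - ∑ i ∈ s.right, (y i - meanOn y s.right) ^ 2)

/-- The local decision stump associated to a split. -/
noncomputable def stump {n : ℕ} (s : Split n) : EuclideanSpace ℝ (Fin n) := WithLp.toLp 2 fun i =>
  if i ∈ s.left then (s.right.card : ℝ) / Real.sqrt (s.left.card * s.right.card)
  else if i ∈ s.right then -(s.left.card : ℝ) / Real.sqrt (s.left.card * s.right.card)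
  else 0

/-- The constant vector of all ones. -/
noncomputable def ones (n : ℕ) : EuclideanSpace ℝ (Fin n) := WithLp.toLp 2 fun _ => 1

/-- A tree structure: any two distinct splits have disjoint or suitably nested nodes. -/
def IsTreeStructure {n : ℕ} (S : Finset (Split n)) : Prop :=
  ∀ s ∈ S, ∀ s' ∈ S, s ≠ s' →
    s.node ∩ s'.node = ∅ ∨ s'.node ⊆ s.left ∨ s'.node ⊆ s.right ∨
      s.node ⊆ s'.left ∨ s.node ⊆ s'.right

/-- Mean decrease in impurity (MDI) of feature `k`, where `feat` assigns to each split the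
feature it splits on. -/
noncomputable def MDI {n p : ℕ} (S : Finset (Split n)) (feat : Split n → Fin p)
    (k : Fin p) (y : Fin n → ℝ) : ℝ :=
  (n : ℝ)⁻¹ * ∑ s ∈ S.filter (fun s => feat s = k), (s.node.card : ℝ) * impurityDecrease s y

/-- A rooted tree structure: a finite nonempty set of splits with pairwise distinct nodes,
exactly one of which is the full sample set, and every non-root node is a child of some split. -/
def IsRootedTree {n : ℕ} (S : Finset (Split n)) : Prop :=
  S.Nonempty ∧ Set.InjOn Split.node (↑S : Set (Split n)) ∧ (∃ s ∈ S, s.node = Finset.univ) ∧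
    ∀ s ∈ S, s.node ≠ Finset.univ → ∃ s' ∈ S, s.node = s'.left ∨ s.node = s'.right

/-- The leaves of a rooted tree structure: children of splits that are not themselves split. -/
def leafSet {n : ℕ} (S : Finset (Split n)) : Finset (Finset (Fin n)) :=
  (S.image Split.left ∪ S.image Split.right).filter fun t => ∀ s ∈ S, s.node ≠ t

variable {n : ℕ}

lemma stump_left {s : Split n} {i : Fin n} (h : i ∈ s.left) :
    stump s i = (s.right.card : ℝ) / Real.sqrt (s.left.card * s.right.card) := by
  simp [stump, h]

lemma stump_right {s : Split n} {i : Fin n} (h : i ∈ s.right) :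
    stump s i = -(s.left.card : ℝ) / Real.sqrt (s.left.card * s.right.card) := by
  have h' : i ∉ s.left := Finset.disjoint_right.mp s.disjoint h
  simp [stump, h, h']

lemma stump_zero {s : Split n} {i : Fin n} (h : i ∉ s.node) : stump s i = 0 := by
  rw [Split.node, Finset.mem_union] at h
  push_neg at h
  simp [stump, h.1, h.2]

lemma sum_mul_stump (s : Split n) (f : Fin n → ℝ) :
    ∑ i, f i * stump s i =
      ((s.right.card : ℝ) * ∑ i ∈ s.left, f i - (s.left.card : ℝ) * ∑ i ∈ s.right, f i) /
        Real.sqrt (s.left.card * s.right.card) := by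
  have h1 : ∑ i ∈ s.left, f i * stump s i =
      (∑ i ∈ s.left, f i) * ((s.right.card : ℝ) / Real.sqrt (s.left.card * s.right.card)) := by
    rw [Finset.sum_mul]
    exact Finset.sum_congr rfl fun i hi => by rw [stump_left hi]
  have h2 : ∑ i ∈ s.right, f i * stump s i =
      (∑ i ∈ s.right, f i) * (-(s.left.card : ℝ) / Real.sqrt (s.left.card * s.right.card)) := by
    rw [Finset.sum_mul]
    exact Finset.sum_congr rfl fun i hi => by rw [stump_right hi]
  rw [← Finset.sum_subset (Finset.subset_univ s.node)
    (fun i _ hi => by rw [stump_zero hi, mul_zero])]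
  rw [Split.node, Finset.sum_union s.disjoint, h1, h2]
  ring

lemma node_card (s : Split n) : (s.node.card : ℝ) = s.left.card + s.right.card := by
  rw [Split.node, Finset.card_union_of_disjoint s.disjoint]; push_cast; ring

lemma left_card_pos (s : Split n) : 0 < (s.left.card : ℝ) := by
  exact_mod_cast Finset.card_pos.mpr s.left_nonempty

lemma right_card_pos (s : Split n) : 0 < (s.right.card : ℝ) := by
  exact_mod_cast Finset.card_pos.mpr s.right_nonempty

lemma node_card_pos (s : Split n) : 0 < (s.node.card : ℝ) := by
  have := left_card_pos s
  have := right_card_pos s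
  rw [node_card]; linarith

lemma sqrt_card_pos (s : Split n) : 0 < Real.sqrt (s.left.card * s.right.card) :=
  Real.sqrt_pos.mpr (mul_pos (left_card_pos s) (right_card_pos s))

lemma sqrt_mul_self' (s : Split n) :
    Real.sqrt (s.left.card * s.right.card) * Real.sqrt (s.left.card * s.right.card)
      = (s.left.card : ℝ) * s.right.card :=
  Real.mul_self_sqrt (le_of_lt (mul_pos (left_card_pos s) (right_card_pos s)))

lemma inner_euclidean (x w : EuclideanSpace ℝ (Fin n)) : ⟪x, w⟫ = ∑ i, x i * w i := by
  simp [PiLp.inner_apply, RCLike.inner_apply, mul_comm]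

lemma sum_stump_left (s : Split n) : ∑ i ∈ s.left, stump s i =
    (s.left.card : ℝ) * ((s.right.card : ℝ) / Real.sqrt (s.left.card * s.right.card)) := by
  have e : ∀ i ∈ s.left, stump s i =
      (s.right.card : ℝ) / Real.sqrt (s.left.card * s.right.card) := fun i hi => stump_left hi
  rw [Finset.sum_congr rfl e, Finset.sum_const, nsmul_eq_mul]

lemma sum_stump_right (s : Split n) : ∑ i ∈ s.right, stump s i =
    (s.right.card : ℝ) * (-(s.left.card : ℝ) / Real.sqrt (s.left.card * s.right.card)) := by
  have e : ∀ i ∈ s.right, stump s i =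
      -(s.left.card : ℝ) / Real.sqrt (s.left.card * s.right.card) := fun i hi => stump_right hi
  rw [Finset.sum_congr rfl e, Finset.sum_const, nsmul_eq_mul]

lemma sum_stump_node (s : Split n) : ∑ i ∈ s.node, stump s i = 0 := by
  rw [Split.node, Finset.sum_union s.disjoint, sum_stump_left, sum_stump_right]
  ring

lemma sum_stump_of_subset {s : Split n} {u : Finset (Fin n)} (h : s.node ⊆ u) :
    ∑ i ∈ u, stump s i = 0 := by
  have e := Finset.sum_subset h (fun i _ hi => stump_zero (s := s) (i := i) hi)
  rw [← e]; exact sum_stump_node s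

lemma sum_stump_of_disjoint {s : Split n} {u : Finset (Fin n)} (h : Disjoint u s.node) :
    ∑ i ∈ u, stump s i = 0 :=
  Finset.sum_eq_zero fun i hi => stump_zero (Finset.disjoint_left.mp h hi)

lemma inner_stump_self (s : Split n) : ⟪stump s, stump s⟫ = s.node.card := by
  rw [inner_euclidean, sum_mul_stump, sum_stump_left, sum_stump_right, node_card]
  set a := Real.sqrt (s.left.card * s.right.card) with ha
  have hq := sqrt_mul_self' s
  rw [← ha] at hq
  have hs : a ≠ 0 := by rw [ha]; exact (sqrt_card_pos s).ne'
  have hl := (left_card_pos s).ne'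
  have hr := (right_card_pos s).ne'
  field_simp
  nlinarith [hq]

lemma inner_stump_zero_of (s s' : Split n)
    (h : s.node ∩ s'.node = ∅ ∨ s'.node ⊆ s.left ∨ s'.node ⊆ s.right) :
    ⟪stump s', stump s⟫ = 0 := by
  rw [inner_euclidean, sum_mul_stump]
  have hL : ∑ i ∈ s.left, stump s' i = 0 := by
    rcases h with h | h | h
    · exact sum_stump_of_disjoint ((Finset.disjoint_iff_inter_eq_empty.mpr h).mono_left
        Finset.subset_union_left)
    · exact sum_stump_of_subset h
    · exact sum_stump_of_disjoint (s.disjoint.mono_right h)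
  have hR : ∑ i ∈ s.right, stump s' i = 0 := by
    rcases h with h | h | h
    · exact sum_stump_of_disjoint ((Finset.disjoint_iff_inter_eq_empty.mpr h).mono_left
        Finset.subset_union_right)
    · exact sum_stump_of_disjoint (s.disjoint.symm.mono_right h)
    · exact sum_stump_of_subset h
  rw [hL, hR]
  ring

lemma mean_sumsq (y : Fin n → ℝ) (t : Finset (Fin n)) (ht : t.Nonempty) :
    ∑ i ∈ t, (y i - meanOn y t) ^ 2
      = ∑ i ∈ t, (y i) ^ 2 - (∑ i ∈ t, y i) ^ 2 / t.card := by
  have hc : (t.card : ℝ) ≠ 0 := by exact_mod_cast (Finset.card_pos.mpr ht).ne'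
  have e : ∑ i ∈ t, (y i - meanOn y t) ^ 2
      = ∑ i ∈ t, ((y i) ^ 2 - 2 * meanOn y t * y i + meanOn y t ^ 2) :=
    Finset.sum_congr rfl fun i _ => by ring
  rw [e, Finset.sum_add_distrib, Finset.sum_sub_distrib, ← Finset.mul_sum,
    Finset.sum_const, nsmul_eq_mul, meanOn]
  field_simp
  ring

lemma key_impurity (s : Split n) (y : EuclideanSpace ℝ (Fin n)) :
    (s.node.card : ℝ) * impurityDecrease s y = ⟪y, stump s⟫ ^ 2 / s.node.card := by
  have hl := left_card_pos s
  have hr := right_card_pos s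
  have hnode : s.node.Nonempty := Finset.Nonempty.mono Finset.subset_union_left s.left_nonempty
  have hsumy : ∑ i ∈ s.node, y i = ∑ i ∈ s.left, y i + ∑ i ∈ s.right, y i := by
    rw [Split.node, Finset.sum_union s.disjoint]
  have hsumy2 : ∑ i ∈ s.node, (y i) ^ 2 = ∑ i ∈ s.left, (y i) ^ 2 + ∑ i ∈ s.right, (y i) ^ 2 := by
    rw [Split.node, Finset.sum_union s.disjoint]
  have ha2 : Real.sqrt ((s.left.card : ℝ) * s.right.card) ^ 2 = (s.left.card : ℝ) * s.right.card :=
    Real.sq_sqrt (le_of_lt (mul_pos hl hr))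
  rw [impurityDecrease, mean_sumsq y s.node hnode, mean_sumsq y s.left s.left_nonempty,
    mean_sumsq y s.right s.right_nonempty, inner_euclidean, sum_mul_stump, hsumy, hsumy2,
    div_pow, ha2, node_card]
  have hlr : (s.left.card : ℝ) + s.right.card ≠ 0 := by linarith
  field_simp
  ring

/-- **Theorem (MDI–R² equivalence).** The normalized MDI of feature `k` equals the `R²` value of
the OLS regression of `y` on the stumps splitting on feature `k` (with intercept), whose fitted
values `ŷ⁽ᵏ⁾` are the orthogonal projection of `y` onto the span of the constant vector together
with those stumps. -/
theorem mdi_eq_rsquared {n p : ℕ} (S : Finset (Split n)) (hS : IsTreeStructure S)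
    (feat : Split n → Fin p) (k : Fin p) (y : EuclideanSpace ℝ (Fin n))
    (ybar : ℝ) (hybar : ybar = (∑ i, y i) / n)
    (yhatk : EuclideanSpace ℝ (Fin n))
    (hyhatk : yhatk = (Submodule.orthogonalProjection
      (Submodule.span ℝ (insert (ones n)
        (stump '' (↑(S.filter fun s => feat s = k) : Set (Split n))))) y :
          EuclideanSpace ℝ (Fin n)))
    (hvar : 0 < ∑ i, (y i - ybar) ^ 2) :
    MDI S feat k y / ((n : ℝ)⁻¹ * ∑ i, (y i - ybar) ^ 2)
      = 1 - (∑ i, (y i - yhatk i) ^ 2) / ∑ i, (y i - ybar) ^ 2 := by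
  classical
  have hn0 : n ≠ 0 := by
    rintro rfl
    simp at hvar
  have hn : (0 : ℝ) < n := by exact_mod_cast Nat.pos_of_ne_zero hn0
  set F := S.filter (fun s => feat s = k) with hF
  set K := Submodule.span ℝ (insert (ones n) (stump '' (↑F : Set (Split n)))) with hK
  set c : Split n → ℝ := fun s => ⟪y, stump s⟫ / (s.node.card : ℝ) with hc
  set v : EuclideanSpace ℝ (Fin n) := ybar • ones n + ∑ s ∈ F, c s • stump s with hv
  have honesK : ones n ∈ K := Submodule.subset_span (Set.mem_insert _ _)
  have hstumpK : ∀ s ∈ F, stump s ∈ K := fun s hs =>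
    Submodule.subset_span (Set.mem_insert_of_mem _ ⟨s, by simpa using hs, rfl⟩)
  have hvK : v ∈ K := by
    refine Submodule.add_mem _ (Submodule.smul_mem _ _ honesK) ?_
    exact Submodule.sum_mem _ fun s hs => Submodule.smul_mem _ _ (hstumpK s hs)
  have horth : ∀ s ∈ F, ∀ s' ∈ F, s ≠ s' → ⟪stump s, stump s'⟫ = 0 := by
    intro s hs s' hs' hne
    have hs1 : s ∈ S := (Finset.mem_filter.mp hs).1
    have hs2 : s' ∈ S := (Finset.mem_filter.mp hs').1
    rcases hS s hs1 s' hs2 hne with h | h | h | h | h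
    · rw [real_inner_comm]; exact inner_stump_zero_of s s' (Or.inl h)
    · rw [real_inner_comm]; exact inner_stump_zero_of s s' (Or.inr (Or.inl h))
    · rw [real_inner_comm]; exact inner_stump_zero_of s s' (Or.inr (Or.inr h))
    · exact inner_stump_zero_of s' s (Or.inr (Or.inl h))
    · exact inner_stump_zero_of s' s (Or.inr (Or.inr h))
  have hones_ones : ⟪ones n, ones n⟫ = (n : ℝ) := by
    rw [inner_euclidean]; simp [ones]
  have hstump_ones : ∀ s : Split n, ⟪stump s, ones n⟫ = 0 := fun s => by
    rw [inner_euclidean]; simpa [ones] using sum_stump_of_subset (s := s) (Finset.subset_univ _)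
  have hones_stump : ∀ s : Split n, ⟪ones n, stump s⟫ = 0 := fun s => by
    rw [real_inner_comm]; exact hstump_ones s
  have hy_ones : ⟪y, ones n⟫ = ∑ i, y i := by
    rw [inner_euclidean]; simp [ones]
  have hybarn : ybar * n = ∑ i, y i := by
    rw [hybar]; field_simp
  have hv_ones : ⟪v, ones n⟫ = ∑ i, y i := by
    rw [hv, inner_add_left, real_inner_smul_left, sum_inner, hones_ones]
    rw [Finset.sum_congr rfl fun s _ => by
      rw [real_inner_smul_left, hstump_ones s, mul_zero]]
    rw [Finset.sum_const_zero, add_zero, hybarn]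
  have hv_stump : ∀ s₀ ∈ F, ⟪v, stump s₀⟫ = ⟪y, stump s₀⟫ := by
    intro s₀ hs₀
    rw [hv, inner_add_left, real_inner_smul_left, hones_stump, mul_zero, zero_add, sum_inner]
    rw [Finset.sum_congr rfl fun s hs => by rw [real_inner_smul_left]]
    rw [Finset.sum_eq_single s₀ (fun s hs hne => by rw [horth s hs s₀ hs₀ hne, mul_zero])
      (fun h => absurd hs₀ h)]
    rw [inner_stump_self]
    simp only [hc]
    exact div_mul_cancel₀ _ (node_card_pos s₀).ne'
  have hperp : ∀ w ∈ K, ⟪y - v, w⟫ = 0 := by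
    intro w hw
    induction hw using Submodule.span_induction with
    | mem w hw =>
      rcases hw with rfl | ⟨s, hs, rfl⟩
      · rw [inner_sub_left, hy_ones, hv_ones, sub_self]
      · have hsF : s ∈ F := by simpa using hs
        rw [inner_sub_left, hv_stump s hsF, sub_self]
    | zero => exact inner_zero_right _
    | add a b _ _ ha hb => rw [inner_add_right, ha, hb, add_zero]
    | smul r a _ ha => rw [real_inner_smul_right, ha, mul_zero]
  have hproj : yhatk = v := by
    rw [hyhatk]
    rw [← Submodule.starProjection_apply]
    exact Submodule.eq_starProjection_of_mem_of_inner_eq_zero hvK hperp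
  -- sums
  set D := ∑ s ∈ F, ⟪y, stump s⟫ ^ 2 / (s.node.card : ℝ) with hD
  have hT : ∑ i, (y i - ybar) ^ 2 = ∑ i, (y i) ^ 2 - ybar * ∑ i, y i := by
    have e : ∀ i : Fin n, (y i - ybar) ^ 2 = (y i) ^ 2 - 2 * ybar * y i + ybar ^ 2 :=
      fun i => by ring
    rw [Finset.sum_congr rfl fun i _ => e i, Finset.sum_add_distrib, Finset.sum_sub_distrib,
      ← Finset.mul_sum, Finset.sum_const, Finset.card_univ, Fintype.card_fin, nsmul_eq_mul]
    rw [← hybarn]; ring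
  have hvy : ⟪v, y⟫ = ybar * ∑ i, y i + D := by
    have h1 : ⟪ones n, y⟫ = ∑ i, y i := by rw [real_inner_comm]; exact hy_ones
    rw [hv, inner_add_left, real_inner_smul_left, h1, sum_inner]
    congr 1
    rw [hD]
    refine Finset.sum_congr rfl fun s _ => ?_
    simp only [hc]
    rw [real_inner_smul_left, real_inner_comm y (stump s)]
    ring
  have hyy : ⟪y, y⟫ = ∑ i, (y i) ^ 2 := by
    rw [inner_euclidean]
    exact Finset.sum_congr rfl fun i _ => by ring
  have hRSS : ∑ i, (y i - v i) ^ 2 = (∑ i, (y i - ybar) ^ 2) - D := by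
    have h1 : ∑ i, (y i - v i) ^ 2 = ⟪y - v, y - v⟫ := by
      rw [inner_euclidean]
      refine Finset.sum_congr rfl fun i _ => ?_
      have : (y - v) i = y i - v i := rfl
      rw [this]; ring
    rw [h1, inner_sub_right, hperp v hvK, sub_zero, inner_sub_left, hyy, hvy, hT]
    ring
  have hMDI : MDI S feat k y = (n : ℝ)⁻¹ * D := by
    rw [MDI, hD]
    congr 1
    exact Finset.sum_congr rfl fun s _ => key_impurity s y
  rw [hproj, hRSS, hMDI]
  have hvarne := hvar.ne'
  field_simp
  ring
end

section
/- Let s and s′ be two splits with nodes t and t′ and local decision stumps ψ_s, ψ_{s′} ∈ ℝⁿ. If t ∩ t′ = ∅, or t′ ⊆ t_L, or t′ ⊆ t_R, or t ⊆ t′_L, or t ⊆ t′_R, then ⟨ψ_s, ψ_{s′}⟩ = 0. Consequently, for any tree structure S, the local decision stumps {ψ_s : s ∈ S} together with the constant vector of all ones form a pairwise orthogonal family of nonzero vectors in ℝⁿ. -/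
open Finset MeasureTheory RealInnerProductSpace

lemma stump_apply_left {n : ℕ} (s : Split n) {i : Fin n} (h : i ∈ s.left) :
    stump s i = (s.right.card : ℝ) / Real.sqrt (s.left.card * s.right.card) := if_pos h

lemma stump_apply_right {n : ℕ} (s : Split n) {i : Fin n} (h : i ∈ s.right) :
    stump s i = -(s.left.card : ℝ) / Real.sqrt (s.left.card * s.right.card) := by
  have hl : i ∉ s.left := fun hl => (Finset.disjoint_left.mp s.disjoint hl) h
  simp [stump, hl, h]

lemma stump_eq_zero {n : ℕ} (s : Split n) {i : Fin n} (h : i ∉ s.node) : stump s i = 0 := by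
  simp only [Split.node, Finset.mem_union, not_or] at h
  simp [stump, h.1, h.2]

lemma sum_stump {n : ℕ} (s : Split n) {t : Finset (Fin n)} (h : s.node ⊆ t) :
    ∑ i ∈ t, stump s i = 0 := by
  rw [← Finset.sum_subset (f := stump s) h (fun i _ hi => stump_eq_zero s hi)]
  rw [show s.node = s.left ∪ s.right from rfl,
    Finset.sum_union s.disjoint,
    Finset.sum_congr (g := fun _ => (s.right.card : ℝ) / Real.sqrt (s.left.card * s.right.card))
      rfl (fun i hi => stump_apply_left s hi),
    Finset.sum_congr (g := fun _ => -(s.left.card : ℝ) / Real.sqrt (s.left.card * s.right.card))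
      rfl (fun i hi => stump_apply_right s hi),
    Finset.sum_const, Finset.sum_const]
  ring

lemma orth_of_subset_left {n : ℕ} (s s' : Split n) (h : s'.node ⊆ s.left) :
    ∑ i, stump s i * stump s' i = 0 := by
  rw [← Finset.sum_subset (Finset.subset_univ s'.node)
      (fun i _ hi => by rw [stump_eq_zero s' hi, mul_zero]),
    Finset.sum_congr (g := fun i => (s.right.card : ℝ) / Real.sqrt (s.left.card * s.right.card)
      * stump s' i) rfl (fun i hi => by rw [stump_apply_left s (h hi)]),
    ← Finset.mul_sum, sum_stump s' (subset_refl _), mul_zero]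

lemma orth_of_subset_right {n : ℕ} (s s' : Split n) (h : s'.node ⊆ s.right) :
    ∑ i, stump s i * stump s' i = 0 := by
  rw [← Finset.sum_subset (Finset.subset_univ s'.node)
      (fun i _ hi => by rw [stump_eq_zero s' hi, mul_zero]),
    Finset.sum_congr (g := fun i => -(s.left.card : ℝ) / Real.sqrt (s.left.card * s.right.card)
      * stump s' i) rfl (fun i hi => by rw [stump_apply_right s (h hi)]),
    ← Finset.mul_sum, sum_stump s' (subset_refl _), mul_zero]

lemma stump_ne_zero {n : ℕ} (s : Split n) : stump s ≠ 0 := by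
  obtain ⟨i, hi⟩ := s.left_nonempty
  intro h
  have h0 : stump s i = 0 := by simpa using congrArg (fun v : EuclideanSpace ℝ (Fin n) => v i) h
  rw [stump_apply_left s hi] at h0
  have hL : (0 : ℝ) < s.left.card := by
    exact_mod_cast Finset.card_pos.mpr s.left_nonempty
  have hR : (0 : ℝ) < s.right.card := by
    exact_mod_cast Finset.card_pos.mpr s.right_nonempty
  have hs : (0 : ℝ) < Real.sqrt (s.left.card * s.right.card) :=
    Real.sqrt_pos.mpr (by positivity)
  exact absurd h0 (ne_of_gt (div_pos hR hs))

/-- Stumps of splits with disjoint or nested nodes are orthogonal; consequently, the stumps of a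
tree structure, together with the all-ones vector, form a pairwise orthogonal family of nonzero
vectors in ℝⁿ. -/
theorem stump_orthogonal {n : ℕ} :
    (∀ s s' : Split n,
      (s.node ∩ s'.node = ∅ ∨ s'.node ⊆ s.left ∨ s'.node ⊆ s.right ∨
        s.node ⊆ s'.left ∨ s.node ⊆ s'.right) →
      ∑ i, stump s i * stump s' i = 0) ∧
    ∀ S : Finset (Split n), IsTreeStructure S →
      (∀ s ∈ S, ∀ s' ∈ S, s ≠ s' → ∑ i, stump s i * stump s' i = 0) ∧
      (∀ s ∈ S, ∑ i, stump s i * ones n i = 0) ∧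
      (∀ s ∈ S, stump s ≠ 0) ∧ (0 < n → ones n ≠ 0) := by
  have main : ∀ s s' : Split n,
      (s.node ∩ s'.node = ∅ ∨ s'.node ⊆ s.left ∨ s'.node ⊆ s.right ∨
        s.node ⊆ s'.left ∨ s.node ⊆ s'.right) →
      ∑ i, stump s i * stump s' i = 0 := by
    intro s s' h
    rcases h with h | h | h | h | h
    · apply Finset.sum_eq_zero
      intro i _
      by_cases hi : i ∈ s.node
      · have : i ∉ s'.node := fun hi' =>
          Finset.notMem_empty i (h ▸ Finset.mem_inter.mpr ⟨hi, hi'⟩)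
        rw [stump_eq_zero s' this, mul_zero]
      · rw [stump_eq_zero s hi, zero_mul]
    · exact orth_of_subset_left s s' h
    · exact orth_of_subset_right s s' h
    · exact (Finset.sum_congr rfl (fun i _ => mul_comm (stump s i) (stump s' i))).trans
        (orth_of_subset_left s' s h)
    · exact (Finset.sum_congr rfl (fun i _ => mul_comm (stump s i) (stump s' i))).trans
        (orth_of_subset_right s' s h)
  refine ⟨main, fun S hS => ⟨fun s hs s' hs' hne => main s s' (hS s hs s' hs' hne),
    fun s _ => ?_, fun s _ => stump_ne_zero s, fun hn h => ?_⟩⟩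
  · simp only [ones, WithLp.ofLp_toLp, mul_one]
    exact sum_stump s (Finset.subset_univ _)
  · have : ones n ⟨0, hn⟩ = 0 := by simpa using congrArg (fun v : EuclideanSpace ℝ (Fin n) => v ⟨0, hn⟩) h
    simp [ones] at this
end

section
/- Let S be a rooted tree structure on {1,…,n}. Then the linear span in ℝⁿ of the constant vector of all ones together with the local decision stumps {ψ_s : s ∈ S} equals the subspace of vectors v ∈ ℝⁿ that are constant on each leaf of S. In particular, since these |S| + 1 vectors are pairwise orthogonal and nonzero, this subspace has dimension |S| + 1, which equals the number of leaves of S. -/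
open Finset MeasureTheory RealInnerProductSpace

namespace TreeAux

variable {n : ℕ}

lemma left_subset_node (s : Split n) : s.left ⊆ s.node := Finset.subset_union_left
lemma right_subset_node (s : Split n) : s.right ⊆ s.node := Finset.subset_union_right

lemma node_nonempty (s : Split n) : s.node.Nonempty :=
  s.left_nonempty.mono (left_subset_node s)

lemma left_ssubset_node (s : Split n) : s.left ⊂ s.node := by
  refine ⟨left_subset_node s, fun h => ?_⟩
  obtain ⟨x, hx⟩ := s.right_nonempty
  exact (Finset.disjoint_left.1 s.disjoint (h (Finset.mem_union_right _ hx)) hx)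

lemma right_ssubset_node (s : Split n) : s.right ⊂ s.node := by
  refine ⟨right_subset_node s, fun h => ?_⟩
  obtain ⟨x, hx⟩ := s.left_nonempty
  exact (Finset.disjoint_left.1 s.disjoint hx (h (Finset.mem_union_left _ hx)))

lemma child_ssubset_node {s : Split n} {t : Finset (Fin n)}
    (h : t = s.left ∨ t = s.right) : t ⊂ s.node := by
  rcases h with h | h <;> subst h
  · exact left_ssubset_node s
  · exact right_ssubset_node s

variable {S : Finset (Split n)}

lemma node_ne (hS : IsRootedTree S) {s s' : Split n} (hs : s ∈ S) (hs' : s' ∈ S)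
    (h : s ≠ s') : s.node ≠ s'.node :=
  fun he => h (hS.2.1 hs hs' he)

/-- Every non-root node is a child of some split. -/
lemma exists_parent (hS : IsRootedTree S) {s : Split n} (hs : s ∈ S)
    (h : s.node ≠ Finset.univ) : ∃ q ∈ S, s.node = q.left ∨ s.node = q.right :=
  hS.2.2.2 s hs h

/-- Key structural lemma, by strong induction on the measure. -/
lemma key (hS : IsRootedTree S) : ∀ m : ℕ, ∀ s ∈ S, ∀ s' ∈ S,
    (n - s.node.card) + (n - s'.node.card) ≤ m → s ≠ s' →
    Disjoint s.node s'.node ∨ s'.node ⊆ s.left ∨ s'.node ⊆ s.right ∨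
      s.node ⊆ s'.left ∨ s.node ⊆ s'.right := by
  intro m
  induction m with
  | zero =>
    intro s hs s' hs' hm hne
    exfalso
    have h1 : s.node = Finset.univ := by
      apply Finset.eq_univ_of_card
      rw [Fintype.card_fin]
      have : s.node.card ≤ n := by simpa using Finset.card_le_univ s.node
      omega
    have h2 : s'.node = Finset.univ := by
      apply Finset.eq_univ_of_card
      rw [Fintype.card_fin]
      have : s'.node.card ≤ n := by simpa using Finset.card_le_univ s'.node
      omega
    exact node_ne hS hs hs' hne (h1.trans h2.symm)
  | succ m ih =>
    intro s hs s' hs' hm hne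
    have nested : ∀ a ∈ S, ∀ b ∈ S,
        (n - a.node.card) + (n - b.node.card) ≤ m + 1 → a.node ⊂ b.node →
        a.node ⊆ b.left ∨ a.node ⊆ b.right := by
      intro a ha b hb hab hsub
      have hanu : a.node ≠ Finset.univ := by
        intro h
        exact hsub.2 (h ▸ Finset.subset_univ _)
      obtain ⟨q, hq, hcq⟩ := exists_parent hS ha hanu
      have hsubq : a.node ⊆ q.node := (child_ssubset_node hcq).1
      by_cases hqb : q = b
      · subst hqb; rcases hcq with h | h <;> [left; right] <;> exact le_of_eq h
      · have hqcard : a.node.card < q.node.card :=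
          Finset.card_lt_card (child_ssubset_node hcq)
        have hqn : q.node.card ≤ n := by simpa using Finset.card_le_univ q.node
        have hmq : (n - q.node.card) + (n - b.node.card) ≤ m := by omega
        obtain ⟨x, hx⟩ := node_nonempty a
        rcases ih q hq b hb hmq hqb with h | h | h | h | h
        · exact absurd (Finset.disjoint_left.1 h (hsubq hx)) (not_not.2 (hsub.1 hx))
        · -- b.node ⊆ q.left
          exfalso
          rcases hcq with hA | hA
          · exact hsub.2 (by rw [hA]; exact h)
          · exact Finset.disjoint_left.1 q.disjoint (h (hsub.1 hx)) (by rw [← hA]; exact hx)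
        · -- b.node ⊆ q.right
          exfalso
          rcases hcq with hA | hA
          · exact Finset.disjoint_left.1 q.disjoint (by rw [← hA]; exact hx) (h (hsub.1 hx))
          · exact hsub.2 (by rw [hA]; exact h)
        · exact Or.inl (hsubq.trans h)
        · exact Or.inr (hsubq.trans h)
    by_cases hs'u : s'.node = Finset.univ
    · have hsub : s.node ⊂ s'.node :=
        lt_of_le_of_ne (hs'u ▸ Finset.subset_univ _) (node_ne hS hs hs' hne)
      rcases nested s hs s' hs' hm hsub with h | h
      · exact Or.inr (Or.inr (Or.inr (Or.inl h)))
      · exact Or.inr (Or.inr (Or.inr (Or.inr h)))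
    by_cases hsu : s.node = Finset.univ
    · have hsub : s'.node ⊂ s.node :=
        lt_of_le_of_ne (hsu ▸ Finset.subset_univ _) (node_ne hS hs' hs hne.symm)
      rcases nested s' hs' s hs (by omega) hsub with h | h
      · exact Or.inr (Or.inl h)
      · exact Or.inr (Or.inr (Or.inl h))
    obtain ⟨p, hp, hcp⟩ := exists_parent hS hs' hs'u
    have hsubp : s'.node ⊆ p.node := (child_ssubset_node hcp).1
    by_cases hps : p = s
    · subst hps
      rcases hcp with h | h
      · exact Or.inr (Or.inl (le_of_eq h))
      · exact Or.inr (Or.inr (Or.inl (le_of_eq h)))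
    · have hpcard : s'.node.card < p.node.card :=
        Finset.card_lt_card (child_ssubset_node hcp)
      have hpn : p.node.card ≤ n := by simpa using Finset.card_le_univ p.node
      have hmp : (n - s.node.card) + (n - p.node.card) ≤ m := by omega
      rcases ih s hs p hp hmp (fun h => hps h.symm) with h | h | h | h | h
      · exact Or.inl (h.mono_right hsubp)
      · exact Or.inr (Or.inl (hsubp.trans h))
      · exact Or.inr (Or.inr (Or.inl (hsubp.trans h)))
      · -- s.node ⊆ p.left
        rcases hcp with hB | hB
        · have hsub : s.node ⊂ s'.node :=
            lt_of_le_of_ne (hB ▸ h) (node_ne hS hs hs' hne)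
          rcases nested s hs s' hs' hm hsub with h' | h'
          · exact Or.inr (Or.inr (Or.inr (Or.inl h')))
          · exact Or.inr (Or.inr (Or.inr (Or.inr h')))
        · exact Or.inl ((p.disjoint.mono_left h).mono_right (le_of_eq hB))
      · -- s.node ⊆ p.right
        rcases hcp with hB | hB
        · exact Or.inl ((p.disjoint.symm.mono_left h).mono_right (le_of_eq hB))
        · have hsub : s.node ⊂ s'.node :=
            lt_of_le_of_ne (hB ▸ h) (node_ne hS hs hs' hne)
          rcases nested s hs s' hs' hm hsub with h' | h'
          · exact Or.inr (Or.inr (Or.inr (Or.inl h')))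
          · exact Or.inr (Or.inr (Or.inr (Or.inr h')))

lemma tree_struct (hS : IsRootedTree S) {s s' : Split n} (hs : s ∈ S) (hs' : s' ∈ S)
    (hne : s ≠ s') :
    Disjoint s.node s'.node ∨ s'.node ⊆ s.left ∨ s'.node ⊆ s.right ∨
      s.node ⊆ s'.left ∨ s.node ⊆ s'.right :=
  key hS _ s hs s' hs' le_rfl hne


lemma leaf_spec {t : Finset (Fin n)} (ht : t ∈ leafSet S) :
    (∃ s ∈ S, t = s.left ∨ t = s.right) ∧ ∀ s ∈ S, s.node ≠ t := by
  rw [leafSet, Finset.mem_filter, Finset.mem_union] at ht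
  refine ⟨?_, ht.2⟩
  rcases ht.1 with h | h <;> rw [Finset.mem_image] at h <;> obtain ⟨s, hs, he⟩ := h
  · exact ⟨s, hs, Or.inl he.symm⟩
  · exact ⟨s, hs, Or.inr he.symm⟩

lemma leaf_mem {s : Split n} (hs : s ∈ S) (t : Finset (Fin n)) (h : t = s.left ∨ t = s.right)
    (h2 : ∀ s' ∈ S, s'.node ≠ t) : t ∈ leafSet S := by
  rw [leafSet, Finset.mem_filter, Finset.mem_union]
  refine ⟨?_, h2⟩
  rcases h with h | h
  · exact Or.inl (Finset.mem_image.2 ⟨s, hs, h.symm⟩)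
  · exact Or.inr (Finset.mem_image.2 ⟨s, hs, h.symm⟩)

lemma leaf_nonempty {t : Finset (Fin n)} (ht : t ∈ leafSet S) : t.Nonempty := by
  obtain ⟨⟨s, hs, hct⟩, -⟩ := leaf_spec ht
  rcases hct with h | h
  · exact h ▸ s.left_nonempty
  · exact h ▸ s.right_nonempty

lemma no_node_subset_leaf (hS : IsRootedTree S) : ∀ m : ℕ, ∀ s ∈ S, n - s.node.card ≤ m →
    ∀ t ∈ leafSet S, ¬ s.node ⊆ t := by
  have univcase : ∀ s : Split n, s.node = Finset.univ → ∀ t ∈ leafSet S, ¬ s.node ⊆ t := by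
    intro s h t ht hsub
    obtain ⟨⟨s₀, hs₀, hct⟩, hnn⟩ := leaf_spec ht
    exact (child_ssubset_node hct).2 ((Finset.subset_univ s₀.node).trans (by rw [← h]; exact hsub))
  intro m
  induction m with
  | zero =>
    intro s hs hm t ht hsub
    refine univcase s ?_ t ht hsub
    apply Finset.eq_univ_of_card
    rw [Fintype.card_fin]
    have : s.node.card ≤ n := by simpa using Finset.card_le_univ s.node
    omega
  | succ m ih =>
    intro s hs hm t ht hsub
    obtain ⟨⟨s₀, hs₀, hct⟩, hnn⟩ := leaf_spec ht
    have htss : t ⊂ s₀.node := child_ssubset_node hct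
    by_cases hne : s.node = Finset.univ
    · exact univcase s hne t ht hsub
    obtain ⟨q, hq, hcq⟩ := exists_parent hS hs hne
    have hsq : s.node ⊆ q.node := (child_ssubset_node hcq).1
    obtain ⟨x, hx⟩ := node_nonempty s
    have hcard : s.node.card < q.node.card := Finset.card_lt_card (child_ssubset_node hcq)
    have hqn : q.node.card ≤ n := by simpa using Finset.card_le_univ q.node
    by_cases hqs₀ : q = s₀
    · subst hqs₀
      rcases hcq with h1 | h1 <;> rcases hct with h2 | h2
      · exact hnn s hs (h1.trans h2.symm)
      · exact Finset.disjoint_left.1 q.disjoint (by rw [← h1]; exact hx)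
          (by rw [← h2] at *; exact hsub hx)
      · exact Finset.disjoint_left.1 q.disjoint (by rw [← h2] at *; exact hsub hx)
          (by rw [← h1]; exact hx)
      · exact hnn s hs (h1.trans h2.symm)
    · rcases tree_struct hS hq hs₀ hqs₀ with h | h | h | h | h
      · exact Finset.disjoint_left.1 h (hsq hx) (htss.1 (hsub hx))
      · -- s₀.node ⊆ q.left
        rcases hcq with h1 | h1
        · exact htss.2 ((h.trans (le_of_eq h1.symm)).trans hsub)
        · exact Finset.disjoint_left.1 q.disjoint (h (htss.1 (hsub hx))) (by rw [← h1]; exact hx)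
      · -- s₀.node ⊆ q.right
        rcases hcq with h1 | h1
        · exact Finset.disjoint_left.1 q.disjoint (by rw [← h1]; exact hx) (h (htss.1 (hsub hx)))
        · exact htss.2 ((h.trans (le_of_eq h1.symm)).trans hsub)
      · -- q.node ⊆ s₀.left
        rcases hct with h2 | h2
        · exact ih q hq (by omega) t ht (h.trans (le_of_eq h2.symm))
        · exact Finset.disjoint_left.1 s₀.disjoint (h (hsq hx)) (by rw [← h2] at *; exact hsub hx)
      · -- q.node ⊆ s₀.right
        rcases hct with h2 | h2
        · exact Finset.disjoint_left.1 s₀.disjoint (by rw [← h2] at *; exact hsub hx) (h (hsq hx))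
        · exact ih q hq (by omega) t ht (h.trans (le_of_eq h2.symm))

lemma leaf_vs_split (hS : IsRootedTree S) {t : Finset (Fin n)} (ht : t ∈ leafSet S)
    {s : Split n} (hs : s ∈ S) :
    t ⊆ s.left ∨ t ⊆ s.right ∨ Disjoint t s.node := by
  obtain ⟨⟨s₀, hs₀, hct⟩, hnn⟩ := leaf_spec ht
  by_cases h0 : s₀ = s
  · subst h0
    rcases hct with h | h
    · exact Or.inl (le_of_eq h)
    · exact Or.inr (Or.inl (le_of_eq h))
  · rcases tree_struct hS hs₀ hs h0 with h | h | h | h | h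
    · exact Or.inr (Or.inr (h.mono_left (child_ssubset_node hct).1))
    · -- s.node ⊆ s₀.left
      rcases hct with h2 | h2
      · exact absurd (h.trans (le_of_eq h2.symm))
          (no_node_subset_leaf hS _ s hs le_rfl t ht)
      · exact Or.inr (Or.inr (s₀.disjoint.symm.mono (le_of_eq h2) h))
    · -- s.node ⊆ s₀.right
      rcases hct with h2 | h2
      · exact Or.inr (Or.inr (s₀.disjoint.mono (le_of_eq h2) h))
      · exact absurd (h.trans (le_of_eq h2.symm))
          (no_node_subset_leaf hS _ s hs le_rfl t ht)
    · exact Or.inl ((child_ssubset_node hct).1.trans h)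
    · exact Or.inr (Or.inl ((child_ssubset_node hct).1.trans h))

lemma leaf_le_or_disjoint (hS : IsRootedTree S) {t t' : Finset (Fin n)}
    (ht : t ∈ leafSet S) (ht' : t' ∈ leafSet S) : t ⊆ t' ∨ Disjoint t t' := by
  obtain ⟨⟨s₀, hs₀, hct⟩, -⟩ := leaf_spec ht'
  rcases leaf_vs_split hS ht hs₀ with h | h | h
  · rcases hct with h2 | h2
    · exact Or.inl (h.trans (le_of_eq h2.symm))
    · exact Or.inr (s₀.disjoint.mono h (le_of_eq h2))
  · rcases hct with h2 | h2
    · exact Or.inr (s₀.disjoint.symm.mono h (le_of_eq h2))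
    · exact Or.inl (h.trans (le_of_eq h2.symm))
  · exact Or.inr (h.mono_right (child_ssubset_node hct).1)

lemma leaf_disjoint (hS : IsRootedTree S) {t t' : Finset (Fin n)}
    (ht : t ∈ leafSet S) (ht' : t' ∈ leafSet S) (hne : t ≠ t') : Disjoint t t' := by
  rcases leaf_le_or_disjoint hS ht ht' with h | h
  · rcases leaf_le_or_disjoint hS ht' ht with h' | h'
    · exact absurd (Finset.Subset.antisymm h h') hne
    · exact h'.symm
  · exact h

lemma cover (hS : IsRootedTree S) : ∀ m : ℕ, ∀ s ∈ S, s.node.card ≤ m →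
    ∀ x ∈ s.node, ∃ t ∈ leafSet S, x ∈ t := by
  intro m
  induction m with
  | zero =>
    intro s hs hm x hx
    have := Finset.card_pos.2 (node_nonempty s)
    omega
  | succ m ih =>
    intro s hs hm x hx
    rcases Finset.mem_union.1 hx with hxc | hxc
    · by_cases hnode : ∃ s'' ∈ S, s''.node = s.left
      · obtain ⟨s'', hs'', he⟩ := hnode
        have : s''.node.card < s.node.card := he ▸ Finset.card_lt_card (left_ssubset_node s)
        exact ih s'' hs'' (by omega) x (by rw [he]; exact hxc)
      · push_neg at hnode
        exact ⟨s.left, leaf_mem hs _ (Or.inl rfl) hnode, hxc⟩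
    · by_cases hnode : ∃ s'' ∈ S, s''.node = s.right
      · obtain ⟨s'', hs'', he⟩ := hnode
        have : s''.node.card < s.node.card := he ▸ Finset.card_lt_card (right_ssubset_node s)
        exact ih s'' hs'' (by omega) x (by rw [he]; exact hxc)
      · push_neg at hnode
        exact ⟨s.right, leaf_mem hs _ (Or.inr rfl) hnode, hxc⟩

lemma covers (hS : IsRootedTree S) (x : Fin n) : ∃ t ∈ leafSet S, x ∈ t := by
  obtain ⟨r, hr, hru⟩ := hS.2.2.1
  exact cover hS _ r hr le_rfl x (by rw [hru]; exact Finset.mem_univ x)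


noncomputable def ind {n : ℕ} (t : Finset (Fin n)) : EuclideanSpace ℝ (Fin n) :=
  WithLp.toLp 2 fun i => if i ∈ t then 1 else 0

lemma card_pos_left (s : Split n) : (0 : ℝ) < s.left.card := by
  exact_mod_cast Finset.card_pos.2 s.left_nonempty

lemma card_pos_right (s : Split n) : (0 : ℝ) < s.right.card := by
  exact_mod_cast Finset.card_pos.2 s.right_nonempty

lemma sqrt_pos (s : Split n) : (0 : ℝ) < Real.sqrt (s.left.card * s.right.card) :=
  Real.sqrt_pos.2 (mul_pos (card_pos_left s) (card_pos_right s))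

lemma stump_left {s : Split n} {i : Fin n} (hi : i ∈ s.left) :
    stump s i = (s.right.card : ℝ) / Real.sqrt (s.left.card * s.right.card) := by
  simp [stump, hi]

lemma stump_right {s : Split n} {i : Fin n} (hi : i ∈ s.right) :
    stump s i = -(s.left.card : ℝ) / Real.sqrt (s.left.card * s.right.card) := by
  have : i ∉ s.left := Finset.disjoint_right.1 s.disjoint hi
  simp [stump, hi, this]

lemma stump_zero {s : Split n} {i : Fin n} (hi : i ∉ s.node) : stump s i = 0 := by
  rw [Split.node, Finset.mem_union] at hi
  push_neg at hi
  simp [stump, hi.1, hi.2]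

lemma sum_stump_node (s : Split n) : ∑ i ∈ s.node, stump s i = 0 := by
  rw [Split.node, Finset.sum_union s.disjoint]
  have h1 : ∑ i ∈ s.left, stump s i
      = s.left.card • ((s.right.card : ℝ) / Real.sqrt (s.left.card * s.right.card)) := by
    rw [← Finset.sum_const]
    exact Finset.sum_congr rfl fun i hi => stump_left hi
  have h2 : ∑ i ∈ s.right, stump s i
      = s.right.card • (-(s.left.card : ℝ) / Real.sqrt (s.left.card * s.right.card)) := by
    rw [← Finset.sum_const]
    exact Finset.sum_congr rfl fun i hi => stump_right hi
  rw [h1, h2, nsmul_eq_mul, nsmul_eq_mul]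
  ring

lemma sum_stump_subset {s : Split n} {A : Finset (Fin n)} (h : s.node ⊆ A) :
    ∑ i ∈ A, stump s i = 0 := by
  have he := Finset.sum_subset (f := fun i => stump s i) h (fun i _ hi => stump_zero hi)
  rw [← he]
  exact sum_stump_node s

lemma inner_ones_stump (s : Split n) : ⟪ones n, stump s⟫ = 0 := by
  rw [PiLp.inner_apply]
  simp only [RCLike.inner_apply, conj_trivial, ones, mul_one]
  exact sum_stump_subset (Finset.subset_univ _)

lemma inner_stump_stump_aux {s s' : Split n}
    (h : s'.node ⊆ s.left ∨ s'.node ⊆ s.right ∨ Disjoint s.node s'.node) :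
    ⟪stump s, stump s'⟫ = 0 := by
  rw [PiLp.inner_apply]
  simp only [RCLike.inner_apply, conj_trivial]
  have key : ∀ c : ℝ, (∀ i ∈ s'.node, stump s i = c) →
      ∑ i : Fin n, stump s i * stump s' i = 0 := by
    intro c hc
    rw [← Finset.sum_subset (Finset.subset_univ s'.node)
        (fun i _ hi => by rw [stump_zero hi, mul_zero])]
    rw [Finset.sum_congr rfl (fun i hi => by rw [hc i hi])]
    rw [← Finset.mul_sum, sum_stump_node, mul_zero]
  rcases h with h | h | h
  · simpa only [mul_comm] using key _ (fun i hi => stump_left (h hi))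
  · simpa only [mul_comm] using key _ (fun i hi => stump_right (h hi))
  · apply Finset.sum_eq_zero
    intro i _
    by_cases hi : i ∈ s.node
    · rw [stump_zero (Finset.disjoint_left.1 h hi), zero_mul]
    · rw [stump_zero hi, mul_zero]

lemma inner_stump_stump (hS : IsRootedTree S) {s s' : Split n} (hs : s ∈ S) (hs' : s' ∈ S)
    (hne : s ≠ s') : ⟪stump s, stump s'⟫ = 0 := by
  rcases tree_struct hS hs hs' hne with h | h | h | h | h
  · exact inner_stump_stump_aux (Or.inr (Or.inr h))
  · exact inner_stump_stump_aux (Or.inl h)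
  · exact inner_stump_stump_aux (Or.inr (Or.inl h))
  · rw [real_inner_comm]; exact inner_stump_stump_aux (Or.inl h)
  · rw [real_inner_comm]; exact inner_stump_stump_aux (Or.inr (Or.inl h))

/-- The span of ones and the stumps. -/
noncomputable def spanM (n : ℕ) (S : Finset (Split n)) : Submodule ℝ (EuclideanSpace ℝ (Fin n)) :=
  Submodule.span ℝ (insert (ones n) (stump '' (↑S : Set (Split n))))

lemma ones_mem_spanM : ones n ∈ spanM n S :=
  Submodule.subset_span (Set.mem_insert _ _)

lemma stump_mem_spanM {s : Split n} (hs : s ∈ S) : stump s ∈ spanM n S :=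
  Submodule.subset_span (Set.mem_insert_of_mem _ ⟨s, hs, rfl⟩)

lemma ind_left_eq (s : Split n) :
    ind s.left = ((s.left.card : ℝ) / (s.node.card : ℝ)) • ind s.node
      + (Real.sqrt (s.left.card * s.right.card) / (s.node.card : ℝ)) • stump s := by
  have hab : (s.node.card : ℝ) = (s.left.card : ℝ) + (s.right.card : ℝ) := by
    rw [Split.node, Finset.card_union_of_disjoint s.disjoint]
    push_cast; ring
  have ha := card_pos_left s
  have hb := card_pos_right s
  have hr := sqrt_pos s
  have hn : (0 : ℝ) < (s.node.card : ℝ) := by rw [hab]; linarith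
  ext i
  show (if i ∈ s.left then (1:ℝ) else 0) = _ + _
  by_cases hil : i ∈ s.left
  · have hin : i ∈ s.node := left_subset_node s hil
    rw [if_pos hil]
    show (1 : ℝ) = _ * (if i ∈ s.node then (1:ℝ) else 0) + _ * stump s i
    rw [if_pos hin, stump_left hil, hab]
    field_simp
  · by_cases hir : i ∈ s.right
    · have hin : i ∈ s.node := right_subset_node s hir
      rw [if_neg hil]
      show (0 : ℝ) = _ * (if i ∈ s.node then (1:ℝ) else 0) + _ * stump s i
      rw [if_pos hin, stump_right hir]
      field_simp
      ring
    · have hin : i ∉ s.node := by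
        rw [Split.node, Finset.mem_union]; tauto
      rw [if_neg hil]
      show (0 : ℝ) = _ * (if i ∈ s.node then (1:ℝ) else 0) + _ * stump s i
      rw [if_neg hin, stump_zero hin]
      ring

lemma ind_right_eq (s : Split n) : ind s.right = ind s.node - ind s.left := by
  ext i
  show (if i ∈ s.right then (1:ℝ) else 0)
    = (if i ∈ s.node then (1:ℝ) else 0) - (if i ∈ s.left then (1:ℝ) else 0)
  by_cases hil : i ∈ s.left
  · have hir : i ∉ s.right := Finset.disjoint_left.1 s.disjoint hil
    rw [if_pos hil, if_neg hir, if_pos (left_subset_node s hil)]; ring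
  · by_cases hir : i ∈ s.right
    · rw [if_pos hir, if_neg hil, if_pos (right_subset_node s hir)]; ring
    · have hin : i ∉ s.node := by rw [Split.node, Finset.mem_union]; tauto
      rw [if_neg hil, if_neg hir, if_neg hin]; ring

lemma ind_children_mem {s : Split n} (hs : s ∈ S) (h : ind s.node ∈ spanM n S) :
    ind s.left ∈ spanM n S ∧ ind s.right ∈ spanM n S := by
  have hl : ind s.left ∈ spanM n S := by
    rw [ind_left_eq s]
    exact Submodule.add_mem _ (Submodule.smul_mem _ _ h)
      (Submodule.smul_mem _ _ (stump_mem_spanM hs))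
  refine ⟨hl, ?_⟩
  rw [ind_right_eq s]
  exact Submodule.sub_mem _ h hl

lemma ind_node_mem (hS : IsRootedTree S) : ∀ m : ℕ, ∀ s ∈ S, n - s.node.card ≤ m →
    ind s.node ∈ spanM n S := by
  have univcase : ∀ s : Split n, s.node = Finset.univ → ind s.node ∈ spanM n S := by
    intro s h
    have : ind s.node = ones n := by
      ext i
      rw [h]
      simp [ind, ones]
    rw [this]
    exact ones_mem_spanM
  intro m
  induction m with
  | zero =>
    intro s hs hm
    apply univcase
    apply Finset.eq_univ_of_card
    rw [Fintype.card_fin]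
    have : s.node.card ≤ n := by simpa using Finset.card_le_univ s.node
    omega
  | succ m ih =>
    intro s hs hm
    by_cases hne : s.node = Finset.univ
    · exact univcase s hne
    obtain ⟨q, hq, hcq⟩ := exists_parent hS hs hne
    have hcard : s.node.card < q.node.card := Finset.card_lt_card (child_ssubset_node hcq)
    have hqn : q.node.card ≤ n := by simpa using Finset.card_le_univ q.node
    have hqmem : ind q.node ∈ spanM n S := ih q hq (by omega)
    rcases hcq with h | h
    · rw [h]; exact (ind_children_mem hq hqmem).1
    · rw [h]; exact (ind_children_mem hq hqmem).2

lemma leaf_ind_mem (hS : IsRootedTree S) {t : Finset (Fin n)} (ht : t ∈ leafSet S) :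
    ind t ∈ spanM n S := by
  obtain ⟨⟨s₀, hs₀, hct⟩, -⟩ := leaf_spec ht
  have := ind_node_mem hS _ s₀ hs₀ le_rfl
  rcases hct with h | h
  · rw [h]; exact (ind_children_mem hs₀ this).1
  · rw [h]; exact (ind_children_mem hs₀ this).2


/-- The submodule of vectors constant on each leaf. -/
def Wsub (n : ℕ) (S : Finset (Split n)) : Submodule ℝ (EuclideanSpace ℝ (Fin n)) where
  carrier := {v | ∀ t ∈ leafSet S, ∀ i ∈ t, ∀ j ∈ t, v i = v j}
  add_mem' := by
    intro u v hu hv t ht i hi j hj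
    show u i + v i = u j + v j
    rw [hu t ht i hi j hj, hv t ht i hi j hj]
  zero_mem' := by intro t ht i hi j hj; rfl
  smul_mem' := by
    intro c v hv t ht i hi j hj
    show c * v i = c * v j
    rw [hv t ht i hi j hj]

lemma mem_Wsub {v : EuclideanSpace ℝ (Fin n)} :
    v ∈ Wsub n S ↔ ∀ t ∈ leafSet S, ∀ i ∈ t, ∀ j ∈ t, v i = v j := Iff.rfl

lemma spanM_le_Wsub (hS : IsRootedTree S) : spanM n S ≤ Wsub n S := by
  rw [spanM, Submodule.span_le]
  intro v hv
  rcases Set.mem_insert_iff.1 hv with rfl | ⟨s, hs, rfl⟩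
  · intro t ht i hi j hj; rfl
  · intro t ht i hi j hj
    rcases leaf_vs_split hS ht hs with h | h | h
    · rw [stump_left (h hi), stump_left (h hj)]
    · rw [stump_right (h hi), stump_right (h hj)]
    · rw [stump_zero (fun hc => Finset.disjoint_left.1 h hi hc),
        stump_zero (fun hc => Finset.disjoint_left.1 h hj hc)]

lemma const_mem_span_ind (hS : IsRootedTree S) {v : EuclideanSpace ℝ (Fin n)}
    (hv : v ∈ Wsub n S) :
    v ∈ Submodule.span ℝ (ind '' (↑(leafSet S) : Set (Finset (Fin n)))) := by
  classical
  have hrepr : v = ∑ t ∈ leafSet S, (if h : t.Nonempty then v h.choose else 0) • ind t := by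
    ext i
    rw [WithLp.ofLp_sum, Finset.sum_apply]
    obtain ⟨t₀, ht₀, hit₀⟩ := covers hS i
    rw [Finset.sum_eq_single t₀]
    · have hch := (leaf_nonempty ht₀).choose_spec
      show v i = (if h : t₀.Nonempty then v h.choose else 0) * (if i ∈ t₀ then (1:ℝ) else 0)
      rw [dif_pos (leaf_nonempty ht₀), if_pos hit₀, mul_one]
      exact hv t₀ ht₀ i hit₀ _ hch
    · intro t ht htne
      have hnotin : i ∉ t := Finset.disjoint_right.1 (leaf_disjoint hS ht ht₀ htne) hit₀
      show (if h : t.Nonempty then v h.choose else 0) * (if i ∈ t then (1:ℝ) else 0) = 0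
      rw [if_neg hnotin, mul_zero]
    · intro habs; exact absurd ht₀ habs
  rw [hrepr]
  apply Submodule.sum_mem
  intro t ht
  exact Submodule.smul_mem _ _ (Submodule.subset_span ⟨t, Finset.mem_coe.2 ht, rfl⟩)

lemma span_ind_le_spanM (hS : IsRootedTree S) :
    Submodule.span ℝ (ind '' (↑(leafSet S) : Set (Finset (Fin n)))) ≤ spanM n S := by
  rw [Submodule.span_le]
  rintro v ⟨t, ht, rfl⟩
  exact leaf_ind_mem hS (Finset.mem_coe.1 ht)

lemma span_ind_eq_spanM (hS : IsRootedTree S) :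
    Submodule.span ℝ (ind '' (↑(leafSet S) : Set (Finset (Fin n)))) = spanM n S :=
  le_antisymm (span_ind_le_spanM hS)
    (fun _ hv => const_mem_span_ind hS (spanM_le_Wsub hS hv))

/-- The family consisting of the ones vector and the stumps. -/
noncomputable def famF (n : ℕ) (S : Finset (Split n)) :
    Option {s : Split n // s ∈ S} → EuclideanSpace ℝ (Fin n) :=
  fun o => o.elim (ones n) (fun z => stump z.1)

lemma range_famF : Set.range (famF n S) = insert (ones n) (stump '' (↑S : Set (Split n))) := by
  ext v
  constructor
  · rintro ⟨o, rfl⟩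
    cases o with
    | none => exact Set.mem_insert _ _
    | some z => exact Set.mem_insert_of_mem _ ⟨z.1, z.2, rfl⟩
  · intro hv
    rcases Set.mem_insert_iff.1 hv with rfl | ⟨s, hs, rfl⟩
    · exact ⟨none, rfl⟩
    · exact ⟨some ⟨s, hs⟩, rfl⟩

lemma famF_indep (hS : IsRootedTree S) : LinearIndependent ℝ (famF n S) := by
  apply linearIndependent_of_ne_zero_of_inner_eq_zero
  · intro o
    cases o with
    | none =>
      obtain ⟨r, hr, -⟩ := hS.2.2.1
      obtain ⟨x, hx⟩ := r.left_nonempty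
      intro h
      exact one_ne_zero (congrArg (fun w : EuclideanSpace ℝ (Fin n) => w x) h : (1 : ℝ) = 0)
    | some z =>
      intro h
      obtain ⟨x, hx⟩ := z.1.left_nonempty
      have hzx : stump z.1 x = 0 := congrArg (fun w : EuclideanSpace ℝ (Fin n) => w x) h
      rw [stump_left hx] at hzx
      exact div_ne_zero (ne_of_gt (card_pos_right _)) (ne_of_gt (sqrt_pos _)) hzx
  · intro o o' hne
    match o, o' with
    | none, none => exact absurd rfl hne
    | none, some z => exact inner_ones_stump z.1
    | some z, none =>
      rw [real_inner_comm]
      exact inner_ones_stump z.1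
    | some z, some z' =>
      exact inner_stump_stump hS z.2 z'.2
        (fun h => hne (congrArg some (Subtype.ext h)))

/-- The family of leaf indicators. -/
noncomputable def famG (n : ℕ) (S : Finset (Split n)) :
    {t : Finset (Fin n) // t ∈ leafSet S} → EuclideanSpace ℝ (Fin n) :=
  fun z => ind z.1

lemma range_famG : Set.range (famG n S) = ind '' (↑(leafSet S) : Set (Finset (Fin n))) := by
  ext v
  constructor
  · rintro ⟨z, rfl⟩
    exact ⟨z.1, Finset.mem_coe.2 z.2, rfl⟩
  · rintro ⟨t, ht, rfl⟩
    exact ⟨⟨t, Finset.mem_coe.1 ht⟩, rfl⟩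

lemma famG_indep (hS : IsRootedTree S) : LinearIndependent ℝ (famG n S) := by
  apply linearIndependent_of_ne_zero_of_inner_eq_zero
  · intro z
    obtain ⟨x, hx⟩ := leaf_nonempty z.2
    intro h
    have : ind z.1 x = 0 := congrArg (fun w : EuclideanSpace ℝ (Fin n) => w x) h
    change (if x ∈ z.1 then (1:ℝ) else 0) = 0 at this
    rw [if_pos hx] at this
    exact one_ne_zero this
  · intro z z' hne
    have hd : Disjoint z.1 z'.1 :=
      leaf_disjoint hS z.2 z'.2 (fun h => hne (Subtype.ext h))
    rw [PiLp.inner_apply]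
    simp only [RCLike.inner_apply, conj_trivial]
    apply Finset.sum_eq_zero
    intro i _
    show (if i ∈ z'.1 then (1:ℝ) else 0) * (if i ∈ z.1 then (1:ℝ) else 0) = 0
    by_cases hi : i ∈ z.1
    · rw [if_neg (Finset.disjoint_left.1 hd hi), zero_mul]
    · rw [if_neg hi, mul_zero]

lemma finrank_spanM (hS : IsRootedTree S) : Module.finrank ℝ (spanM n S) = S.card + 1 := by
  have hf := finrank_span_eq_card (famF_indep hS)
  rw [range_famF] at hf
  rw [spanM, hf]
  simp [Fintype.card_option, Fintype.card_coe]

lemma card_leafSet (hS : IsRootedTree S) : (leafSet S).card = S.card + 1 := by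
  have hg := finrank_span_eq_card (famG_indep hS)
  rw [range_famG, span_ind_eq_spanM hS, finrank_spanM hS] at hg
  rw [← Fintype.card_coe (leafSet S), ← hg]

end TreeAux

/-- For a rooted tree structure, the span of the all-ones vector together with the local decision
stumps is exactly the subspace of vectors constant on each leaf; this subspace has dimension
`|S| + 1`, which equals the number of leaves. -/
theorem span_stumps_eq_leafwise_constant {n : ℕ} (S : Finset (Split n))
    (hS : IsRootedTree S) :
    (∀ v : EuclideanSpace ℝ (Fin n),
        v ∈ Submodule.span ℝ (insert (ones n) (stump '' (↑S : Set (Split n)))) ↔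
        ∀ t ∈ leafSet S, ∀ i ∈ t, ∀ j ∈ t, v i = v j) ∧
    Module.finrank ℝ
        ↥(Submodule.span ℝ (insert (ones n) (stump '' (↑S : Set (Split n))))) = S.card + 1 ∧
    (leafSet S).card = S.card + 1 := by
  refine ⟨?_, ?_, TreeAux.card_leafSet hS⟩
  · intro v
    constructor
    · intro hv
      exact TreeAux.spanM_le_Wsub hS hv
    · intro hv
      show v ∈ TreeAux.spanM n S
      exact TreeAux.span_ind_le_spanM hS
        (TreeAux.const_mem_span_ind hS (TreeAux.mem_Wsub.2 hv))
  · exact TreeAux.finrank_spanM hS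
end

section
/- Let S be a rooted tree structure on {1,…,n} and let y ∈ ℝⁿ. For each i, let ŷ_i denote the mean of y over the leaf of S containing i (the CART prediction). Then ŷ equals the orthogonal projection of y onto the linear span of the constant vector of all ones together with the local decision stumps {ψ_s : s ∈ S}; explicitly, ŷ = ȳ·1 + Σ_{s∈S} (⟨ψ_s, y⟩ / ‖ψ_s‖²) ψ_s, where ȳ is the mean of y. That is, the CART model equals the best-fit linear model of y on the transformed dataset of local decision stump features (with intercept). -/
open Finset MeasureTheory RealInnerProductSpace

namespace CartAux

attribute [local instance] Classical.propDecidable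

variable {n : ℕ}

noncomputable def coef (y : EuclideanSpace ℝ (Fin n)) (s : Split n) : ℝ :=
  (∑ j, stump s j * y j) / ∑ j, stump s j ^ 2

lemma node_nonempty (s : Split n) : s.node.Nonempty :=
  s.left_nonempty.mono Finset.subset_union_left

lemma left_card_pos (s : Split n) : 0 < (s.left.card : ℝ) := by
  exact_mod_cast Finset.card_pos.mpr s.left_nonempty

lemma right_card_pos (s : Split n) : 0 < (s.right.card : ℝ) := by
  exact_mod_cast Finset.card_pos.mpr s.right_nonempty

lemma sqrt_sq (s : Split n) :
    Real.sqrt ((s.left.card : ℝ) * s.right.card) * Real.sqrt ((s.left.card : ℝ) * s.right.card)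
      = (s.left.card : ℝ) * s.right.card :=
  Real.mul_self_sqrt (by positivity)

lemma sqrt_pos (s : Split n) : 0 < Real.sqrt ((s.left.card : ℝ) * s.right.card) :=
  Real.sqrt_pos.mpr (mul_pos (left_card_pos s) (right_card_pos s))

lemma node_card (s : Split n) : (s.node.card : ℕ) = s.left.card + s.right.card :=
  Finset.card_union_of_disjoint s.disjoint

lemma stump_left {s : Split n} {i : Fin n} (hi : i ∈ s.left) :
    stump s i = (s.right.card : ℝ) / Real.sqrt (s.left.card * s.right.card) := by
  simp [stump, hi]

lemma notmem_right {s : Split n} {i : Fin n} (hi : i ∈ s.left) : i ∉ s.right :=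
  fun h => (Finset.disjoint_left.mp s.disjoint hi) h

lemma stump_right {s : Split n} {i : Fin n} (hi : i ∈ s.right) :
    stump s i = -(s.left.card : ℝ) / Real.sqrt (s.left.card * s.right.card) := by
  have : i ∉ s.left := fun h => (Finset.disjoint_left.mp s.disjoint h) hi
  simp [stump, hi, this]

lemma stump_zero {s : Split n} {i : Fin n} (hi : i ∉ s.node) : stump s i = 0 := by
  rw [Split.node, Finset.mem_union] at hi
  push_neg at hi
  simp [stump, hi.1, hi.2]

lemma sum_stump_sq (s : Split n) : ∑ j, stump s j ^ 2 = (s.left.card : ℝ) + s.right.card := by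
  have h1 : ∑ j, stump s j ^ 2 = ∑ j ∈ s.node, stump s j ^ 2 := by
    refine (Finset.sum_subset (Finset.subset_univ _) ?_).symm
    intro x _ hx
    rw [stump_zero hx]; ring
  rw [h1, Split.node, Finset.sum_union s.disjoint]
  have hL : ∀ j ∈ s.left, stump s j ^ 2
      = (s.right.card : ℝ) ^ 2 / ((s.left.card : ℝ) * s.right.card) := by
    intro j hj
    rw [stump_left hj, div_pow, Real.sq_sqrt (by positivity)]
  have hR : ∀ j ∈ s.right, stump s j ^ 2
      = (s.left.card : ℝ) ^ 2 / ((s.left.card : ℝ) * s.right.card) := by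
    intro j hj
    rw [stump_right hj, div_pow, Real.sq_sqrt (by positivity)]
    ring_nf
  rw [Finset.sum_congr rfl hL, Finset.sum_congr rfl hR, Finset.sum_const, Finset.sum_const,
    nsmul_eq_mul, nsmul_eq_mul]
  have ha := left_card_pos s
  have hb := right_card_pos s
  field_simp
  ring

lemma sum_stump_mul (s : Split n) (y : EuclideanSpace ℝ (Fin n)) :
    ∑ j, stump s j * y j =
      ((s.right.card : ℝ) * ∑ j ∈ s.left, y j - (s.left.card : ℝ) * ∑ j ∈ s.right, y j)
        / Real.sqrt ((s.left.card : ℝ) * s.right.card) := by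
  have h1 : ∑ j, stump s j * y j = ∑ j ∈ s.node, stump s j * y j := by
    refine (Finset.sum_subset (Finset.subset_univ _) ?_).symm
    intro x _ hx
    rw [stump_zero hx]; ring
  rw [h1, Split.node, Finset.sum_union s.disjoint]
  have e1 : ∑ j ∈ s.left, stump s j * y j
      = (s.right.card : ℝ) / Real.sqrt ((s.left.card : ℝ) * s.right.card) * ∑ j ∈ s.left, y j := by
    rw [Finset.mul_sum]
    exact Finset.sum_congr rfl fun j hj => by rw [stump_left hj]
  have e2 : ∑ j ∈ s.right, stump s j * y j
      = -(s.left.card : ℝ) / Real.sqrt ((s.left.card : ℝ) * s.right.card) * ∑ j ∈ s.right, y j := by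
    rw [Finset.mul_sum]
    exact Finset.sum_congr rfl fun j hj => by rw [stump_right hj]
  rw [e1, e2]
  ring

lemma aux_alg_left (a b r YL YR : ℝ) (ha : 0 < a) (hb : 0 < b) (hr : 0 < r)
    (hr2 : r * r = a * b) :
    (b * YL - a * YR) / r / (a + b) * (b / r) = YL / a - (YL + YR) / (a + b) := by
  have hab : 0 < a + b := by linarith
  rw [div_div, div_mul_div_comm]
  have h3 : r * (a + b) * r = a * b * (a + b) := by rw [← hr2]; ring
  rw [h3]
  field_simp
  ring

lemma aux_alg_right (a b r YL YR : ℝ) (ha : 0 < a) (hb : 0 < b) (hr : 0 < r)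
    (hr2 : r * r = a * b) :
    (b * YL - a * YR) / r / (a + b) * (-a / r) = YR / b - (YL + YR) / (a + b) := by
  have hab : 0 < a + b := by linarith
  rw [div_div, div_mul_div_comm]
  have h3 : r * (a + b) * r = a * b * (a + b) := by rw [← hr2]; ring
  rw [h3]
  field_simp
  ring

lemma card_node_real (s : Split n) : ((s.node.card : ℕ) : ℝ) = (s.left.card : ℝ) + s.right.card := by
  rw [node_card s]; push_cast; ring

lemma coef_stump_left {s : Split n} {i : Fin n} (hi : i ∈ s.left)
    (y : EuclideanSpace ℝ (Fin n)) :
    coef y s * stump s i = meanOn (fun j => y j) s.left - meanOn (fun j => y j) s.node := by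
  have ha := left_card_pos s
  have hb := right_card_pos s
  have hr := sqrt_pos s
  have hr2 := sqrt_sq s
  rw [coef, sum_stump_sq, sum_stump_mul, stump_left hi, meanOn, meanOn]
  rw [show s.node = s.left ∪ s.right from rfl, Finset.sum_union s.disjoint]
  rw [show (((s.left ∪ s.right).card : ℕ) : ℝ) = (s.left.card : ℝ) + s.right.card from
    card_node_real s]
  exact aux_alg_left _ _ _ _ _ ha hb hr hr2

lemma coef_stump_right {s : Split n} {i : Fin n} (hi : i ∈ s.right)
    (y : EuclideanSpace ℝ (Fin n)) :
    coef y s * stump s i = meanOn (fun j => y j) s.right - meanOn (fun j => y j) s.node := by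
  have ha := left_card_pos s
  have hb := right_card_pos s
  have hr := sqrt_pos s
  have hr2 := sqrt_sq s
  rw [coef, sum_stump_sq, sum_stump_mul, stump_right hi, meanOn, meanOn]
  rw [show s.node = s.left ∪ s.right from rfl, Finset.sum_union s.disjoint]
  rw [show (((s.left ∪ s.right).card : ℕ) : ℝ) = (s.left.card : ℝ) + s.right.card from
    card_node_real s]
  exact aux_alg_right _ _ _ _ _ ha hb hr hr2


def IsTreeOn (t : Finset (Fin n)) (S : Finset (Split n)) : Prop :=
  Set.InjOn Split.node (↑S : Set (Split n)) ∧ (∀ s ∈ S, s.node ⊆ t) ∧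
  (∀ s ∈ S, s.node ≠ t → ∃ s' ∈ S, s.node = s'.left ∨ s.node = s'.right) ∧
  (S.Nonempty → ∃ s ∈ S, s.node = t)

def IsLeafOf (t : Finset (Fin n)) (S : Finset (Split n)) (c : Finset (Fin n)) : Prop :=
  (S = ∅ ∧ c = t) ∨ ((∃ s ∈ S, c = s.left ∨ c = s.right) ∧ ∀ s' ∈ S, s'.node ≠ c)

lemma child_subset_node {s : Split n} {c : Finset (Fin n)} (h : c = s.left ∨ c = s.right) :
    c ⊆ s.node := by
  rcases h with rfl | rfl
  · exact Finset.subset_union_left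
  · exact Finset.subset_union_right

lemma child_ssubset_node {s : Split n} {c : Finset (Fin n)} (h : c = s.left ∨ c = s.right) :
    c ⊂ s.node := by
  refine Finset.ssubset_iff_of_subset (child_subset_node h) |>.mpr ?_
  rcases h with rfl | rfl
  · obtain ⟨x, hx⟩ := s.right_nonempty
    exact ⟨x, Finset.mem_union_right _ hx, fun hc => Finset.disjoint_left.mp s.disjoint hc hx⟩
  · obtain ⟨x, hx⟩ := s.left_nonempty
    exact ⟨x, Finset.mem_union_left _ hx, fun hc => Finset.disjoint_left.mp s.disjoint hx hc⟩

section Decomp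

variable {t : Finset (Fin n)} {S : Finset (Split n)} {s0 : Split n}

/-- every non-root split's node is inside a child of the root -/
lemma node_in_child (hT : IsTreeOn t S) (hs0 : s0 ∈ S) (hroot : s0.node = t) :
    ∀ s ∈ S, s ≠ s0 → s.node ⊆ s0.left ∨ s.node ⊆ s0.right := by
  obtain ⟨hinj, hsub, hpar, -⟩ := hT
  have key : ∀ k : ℕ, ∀ s ∈ S, s ≠ s0 → t.card - s.node.card ≤ k →
      s.node ⊆ s0.left ∨ s.node ⊆ s0.right := by
    intro k
    induction k with
    | zero =>
      intro s hs hne hle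
      exfalso
      have h1 : t.card ≤ s.node.card := by omega
      have h2 : s.node = t := Finset.eq_of_subset_of_card_le (hsub s hs) h1
      exact hne (hinj hs hs0 (h2.trans hroot.symm))
    | succ k ih =>
      intro s hs hne hle
      have hnet : s.node ≠ t := fun h => hne (hinj hs hs0 (h.trans hroot.symm))
      obtain ⟨s', hs', hch⟩ := hpar s hs hnet
      by_cases h0 : s' = s0
      · subst h0
        exact hch.imp (fun h => le_of_eq h) (fun h => le_of_eq h)
      · have hss : s.node ⊂ s'.node := child_ssubset_node hch
        have hcard : s.node.card < s'.node.card := Finset.card_lt_card hss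
        have hle' : s'.node.card ≤ t.card := Finset.card_le_card (hsub s' hs')
        have := ih s' hs' h0 (by omega)
        exact this.imp (fun h => hss.subset.trans h) (fun h => hss.subset.trans h)
  intro s hs hne
  exact key (t.card - s.node.card) s hs hne le_rfl

end Decomp


lemma both_children_absurd {s : Split n} {A : Finset (Fin n)} (hA : A.Nonempty)
    (h1 : A ⊆ s.left) (h2 : A ⊆ s.right) : False := by
  obtain ⟨x, hx⟩ := hA
  exact Finset.disjoint_left.mp s.disjoint (h1 hx) (h2 hx)

section Decomp2

variable {t : Finset (Fin n)} {S : Finset (Split n)} {s0 : Split n} {c : Finset (Fin n)}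

lemma parent_in_sub (hT : IsTreeOn t S) (hs0 : s0 ∈ S) (hroot : s0.node = t)
    (hc : c = s0.left ∨ c = s0.right) :
    ∀ s ∈ (S.erase s0).filter (fun s => s.node ⊆ c), s.node ≠ c →
      ∃ s' ∈ (S.erase s0).filter (fun s => s.node ⊆ c),
        s.node = s'.left ∨ s.node = s'.right := by
  intro s hs hne
  rw [Finset.mem_filter, Finset.mem_erase] at hs
  obtain ⟨⟨hsne, hsS⟩, hsc⟩ := hs
  have hnodet : s.node ≠ t := by
    have : s.node ⊂ t := Finset.ssubset_of_subset_of_ssubset hsc (hroot ▸ child_ssubset_node hc)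
    exact this.ne
  obtain ⟨s', hs'S, hch⟩ := hT.2.2.1 s hsS hnodet
  have hnonempty : s.node.Nonempty := node_nonempty s
  have hs'ne : s' ≠ s0 := by
    rintro rfl
    rcases hc with rfl | rfl
    · rcases hch with h | h
      · exact hne h
      · exact both_children_absurd hnonempty hsc (le_of_eq h)
    · rcases hch with h | h
      · exact both_children_absurd hnonempty (le_of_eq h) hsc
      · exact hne h
  have hsub' : s'.node ⊆ c := by
    have := node_in_child hT hs0 hroot s' hs'S hs'ne
    have hsn : s.node ⊆ s'.node := child_subset_node hch
    rcases hc with rfl | rfl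
    · rcases this with h | h
      · exact h
      · exact (both_children_absurd hnonempty hsc (hsn.trans h)).elim
    · rcases this with h | h
      · exact (both_children_absurd hnonempty (hsn.trans h) hsc).elim
      · exact h
  exact ⟨s', Finset.mem_filter.mpr ⟨Finset.mem_erase.mpr ⟨hs'ne, hs'S⟩, hsub'⟩, hch⟩

lemma root_in_sub (hT : IsTreeOn t S) (hs0 : s0 ∈ S) (hroot : s0.node = t)
    (hc : c = s0.left ∨ c = s0.right) :
    ((S.erase s0).filter (fun s => s.node ⊆ c)).Nonempty →
      ∃ s ∈ (S.erase s0).filter (fun s => s.node ⊆ c), s.node = c := by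
  set SL := (S.erase s0).filter (fun s => s.node ⊆ c) with hSL
  have key : ∀ k : ℕ, ∀ s ∈ SL, c.card - s.node.card ≤ k → ∃ r ∈ SL, r.node = c := by
    intro k
    induction k with
    | zero =>
      intro s hs hle
      refine ⟨s, hs, ?_⟩
      rw [hSL, Finset.mem_filter] at hs
      exact Finset.eq_of_subset_of_card_le hs.2 (by omega)
    | succ k ih =>
      intro s hs hle
      by_cases h : s.node = c
      · exact ⟨s, hs, h⟩
      · obtain ⟨s', hs', hch⟩ := parent_in_sub hT hs0 hroot hc s hs h
        have hss : s.node ⊂ s'.node := child_ssubset_node hch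
        have hcard : s.node.card < s'.node.card := Finset.card_lt_card hss
        have hle' : s'.node.card ≤ c.card :=
          Finset.card_le_card (Finset.mem_filter.mp hs').2
        exact ih s' hs' (by omega)
  rintro ⟨s, hs⟩
  exact key (c.card - s.node.card) s hs le_rfl

lemma tree_sub (hT : IsTreeOn t S) (hs0 : s0 ∈ S) (hroot : s0.node = t)
    (hc : c = s0.left ∨ c = s0.right) :
    IsTreeOn c ((S.erase s0).filter (fun s => s.node ⊆ c)) := by
  refine ⟨?_, ?_, ?_, root_in_sub hT hs0 hroot hc⟩
  · intro a ha b hb hab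
    exact hT.1 (Finset.mem_of_mem_erase (Finset.mem_of_mem_filter _ (by exact_mod_cast ha)))
      (Finset.mem_of_mem_erase (Finset.mem_of_mem_filter _ (by exact_mod_cast hb))) hab
  · intro s hs
    exact (Finset.mem_filter.mp hs).2
  · intro s hs hne
    exact parent_in_sub hT hs0 hroot hc s hs hne

lemma leaf_transfer (hT : IsTreeOn t S) (hs0 : s0 ∈ S) (hroot : s0.node = t)
    (hc : c = s0.left ∨ c = s0.right) :
    ∀ d, IsLeafOf c ((S.erase s0).filter (fun s => s.node ⊆ c)) d → IsLeafOf t S d := by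
  set SL := (S.erase s0).filter (fun s => s.node ⊆ c) with hSL
  have hcnonempty : c.Nonempty := by
    rcases hc with rfl | rfl
    · exact s0.left_nonempty
    · exact s0.right_nonempty
  have hnode_ne : ∀ s' ∈ S, s'.node ≠ c → True := fun _ _ _ => trivial
  intro d hd
  rcases hd with ⟨hSLe, rfl⟩ | ⟨⟨s, hsSL, hchild⟩, hnoSL⟩
  · -- c itself is a leaf of S
    refine Or.inr ⟨⟨s0, hs0, hc⟩, ?_⟩
    intro s' hs' hnode
    by_cases h0 : s' = s0
    · subst h0
      rcases hc with rfl | rfl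
      · exact both_children_absurd s'.right_nonempty
          (by rw [← hnode]; exact Finset.subset_union_right) (Finset.Subset.refl _)
      · exact both_children_absurd s'.left_nonempty
          (Finset.Subset.refl _) (by rw [← hnode]; exact Finset.subset_union_left)
    · have := node_in_child hT hs0 hroot s' hs' h0
      have hne' : s' ∉ SL := by rw [hSLe]; simp
      rw [hSL, Finset.mem_filter, Finset.mem_erase] at hne'
      push_neg at hne'
      have h2 := hne' ⟨h0, hs'⟩
      rcases hc with rfl | rfl
      · rcases this with h | h
        · exact h2 (hnode ▸ Finset.Subset.refl _)
        · exact both_children_absurd (node_nonempty s') (le_of_eq hnode) h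
      · rcases this with h | h
        · exact both_children_absurd (node_nonempty s') h (le_of_eq hnode)
        · exact h2 (hnode ▸ Finset.Subset.refl _)
  · -- a leaf of the subtree is a leaf of S
    rw [hSL, Finset.mem_filter, Finset.mem_erase] at hsSL
    obtain ⟨⟨hsne, hsS⟩, hsc⟩ := hsSL
    have hdc : d ⊆ c := (child_subset_node hchild).trans hsc
    have hdnonempty : d.Nonempty := by
      rcases hchild with rfl | rfl
      · exact s.left_nonempty
      · exact s.right_nonempty
    refine Or.inr ⟨⟨s, hsS, hchild⟩, ?_⟩
    intro s' hs' hnode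
    by_cases h0 : s' = s0
    · subst h0
      have hnc : s'.node ⊆ c := hnode ▸ hdc
      rcases hc with rfl | rfl
      · exact both_children_absurd s'.right_nonempty
          (Finset.subset_union_right.trans hnc) (Finset.Subset.refl _)
      · exact both_children_absurd s'.left_nonempty (Finset.Subset.refl _)
          (Finset.subset_union_left.trans hnc)
    · rcases node_in_child hT hs0 hroot s' hs' h0 with h | h
      · rcases hc with rfl | rfl
        · exact hnoSL s' (by
            rw [hSL, Finset.mem_filter, Finset.mem_erase]
            exact ⟨⟨h0, hs'⟩, h⟩) hnode
        · exact both_children_absurd hdnonempty (hnode ▸ h) hdc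
      · rcases hc with rfl | rfl
        · exact both_children_absurd hdnonempty hdc (hnode ▸ h)
        · exact hnoSL s' (by
            rw [hSL, Finset.mem_filter, Finset.mem_erase]
            exact ⟨⟨h0, hs'⟩, h⟩) hnode

end Decomp2

lemma sum_sub_meanOn (f : Fin n → ℝ) (t : Finset (Fin n)) :
    ∑ i ∈ t, (f i - meanOn f t) = 0 := by
  rw [Finset.sum_sub_distrib, Finset.sum_const, nsmul_eq_mul, meanOn]
  rcases eq_or_ne t ∅ with rfl | h
  · simp
  · have : (t.card : ℝ) ≠ 0 := by
      exact_mod_cast Finset.card_ne_zero.mpr (Finset.nonempty_of_ne_empty h)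
    field_simp
    ring

lemma erase_decomp {t : Finset (Fin n)} {S : Finset (Split n)} {s0 : Split n}
    (hT : IsTreeOn t S) (hs0 : s0 ∈ S) (hroot : s0.node = t) :
    S.erase s0 = (S.erase s0).filter (fun s => s.node ⊆ s0.left)
        ∪ (S.erase s0).filter (fun s => s.node ⊆ s0.right) ∧
      Disjoint ((S.erase s0).filter (fun s => s.node ⊆ s0.left))
        ((S.erase s0).filter (fun s => s.node ⊆ s0.right)) := by
  constructor
  · ext s
    simp only [Finset.mem_union, Finset.mem_filter, Finset.mem_erase]
    constructor
    · rintro ⟨hne, hs⟩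
      rcases node_in_child hT hs0 hroot s hs hne with h | h
      · exact Or.inl ⟨⟨hne, hs⟩, h⟩
      · exact Or.inr ⟨⟨hne, hs⟩, h⟩
    · rintro (⟨h, -⟩ | ⟨h, -⟩) <;> exact h
  · rw [Finset.disjoint_left]
    rintro s hs1 hs2
    exact both_children_absurd (node_nonempty s) (Finset.mem_filter.mp hs1).2
      (Finset.mem_filter.mp hs2).2

lemma sub_ssubset {S : Finset (Split n)} {s0 : Split n}
    (hs0 : s0 ∈ S) (c : Finset (Fin n)) :
    (S.erase s0).filter (fun s => s.node ⊆ c) ⊂ S :=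
  lt_of_le_of_lt (Finset.filter_subset _ _) (Finset.erase_ssubset hs0)

lemma formulaA (y yhat : EuclideanSpace ℝ (Fin n)) :
    ∀ S : Finset (Split n), ∀ t : Finset (Fin n), IsTreeOn t S →
    (∀ c, IsLeafOf t S c → ∀ i ∈ c, yhat i = meanOn (fun j => y j) c) →
    ∀ i ∈ t, yhat i = meanOn (fun j => y j) t + ∑ s ∈ S, coef y s * stump s i := by
  intro S
  induction S using Finset.strongInduction with
  | _ S ih =>
    intro t hT hleaf i hi
    rcases eq_or_ne S ∅ with rfl | hne
    · rw [Finset.sum_empty, add_zero]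
      exact hleaf t (Or.inl ⟨rfl, rfl⟩) i hi
    · obtain ⟨s0, hs0, hroot⟩ := hT.2.2.2 (Finset.nonempty_of_ne_empty hne)
      set SL := (S.erase s0).filter (fun s => s.node ⊆ s0.left) with hSLdef
      set SR := (S.erase s0).filter (fun s => s.node ⊆ s0.right) with hSRdef
      have hdec := erase_decomp hT hs0 hroot
      have hsum : ∑ s ∈ S, coef y s * stump s i
          = coef y s0 * stump s0 i
            + (∑ s ∈ SL, coef y s * stump s i + ∑ s ∈ SR, coef y s * stump s i) := by
        conv_lhs => rw [← Finset.insert_erase hs0]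
        rw [Finset.sum_insert (Finset.notMem_erase _ _), hdec.1, Finset.sum_union hdec.2]
      have htu : t = s0.left ∪ s0.right := by rw [← hroot]; rfl
      have hi' : i ∈ s0.left ∨ i ∈ s0.right := by
        rw [htu] at hi; exact Finset.mem_union.mp hi
      rcases hi' with hiL | hiR
      · have hL := ih SL (sub_ssubset hs0 _) s0.left (tree_sub hT hs0 hroot (Or.inl rfl))
          (fun c hc => hleaf c (leaf_transfer hT hs0 hroot (Or.inl rfl) c hc)) i hiL
        have hR0 : ∑ s ∈ SR, coef y s * stump s i = 0 := by
          refine Finset.sum_eq_zero fun s hs => ?_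
          have hnot : i ∉ s.node := fun hmem =>
            Finset.disjoint_left.mp s0.disjoint hiL ((Finset.mem_filter.mp hs).2 hmem)
          rw [stump_zero hnot]; ring
        rw [hsum, hR0, add_zero, hL, coef_stump_left hiL y, hroot]
        ring
      · have hR := ih SR (sub_ssubset hs0 _) s0.right (tree_sub hT hs0 hroot (Or.inr rfl))
          (fun c hc => hleaf c (leaf_transfer hT hs0 hroot (Or.inr rfl) c hc)) i hiR
        have hL0 : ∑ s ∈ SL, coef y s * stump s i = 0 := by
          refine Finset.sum_eq_zero fun s hs => ?_
          have hnot : i ∉ s.node := fun hmem =>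
            Finset.disjoint_right.mp s0.disjoint hiR ((Finset.mem_filter.mp hs).2 hmem)
          rw [stump_zero hnot]; ring
        rw [hsum, hL0, zero_add, hR, coef_stump_right hiR y, hroot]
        ring

lemma sumB (y yhat : EuclideanSpace ℝ (Fin n)) :
    ∀ S : Finset (Split n), ∀ t : Finset (Fin n), IsTreeOn t S →
    (∀ c, IsLeafOf t S c → ∀ i ∈ c, yhat i = meanOn (fun j => y j) c) →
    (∑ i ∈ t, (y i - yhat i)) = 0 ∧
      ∀ s ∈ S, ∑ i ∈ t, stump s i * (y i - yhat i) = 0 := by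
  intro S
  induction S using Finset.strongInduction with
  | _ S ih =>
    intro t hT hleaf
    rcases eq_or_ne S ∅ with rfl | hne
    · refine ⟨?_, by simp⟩
      have h := hleaf t (Or.inl ⟨rfl, rfl⟩)
      calc ∑ i ∈ t, (y i - yhat i) = ∑ i ∈ t, (y i - meanOn (fun j => y j) t) :=
            Finset.sum_congr rfl fun i hi => by rw [h i hi]
        _ = 0 := sum_sub_meanOn _ t
    · obtain ⟨s0, hs0, hroot⟩ := hT.2.2.2 (Finset.nonempty_of_ne_empty hne)
      set SL := (S.erase s0).filter (fun s => s.node ⊆ s0.left) with hSLdef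
      set SR := (S.erase s0).filter (fun s => s.node ⊆ s0.right) with hSRdef
      have hdec := erase_decomp hT hs0 hroot
      have htu : t = s0.left ∪ s0.right := by rw [← hroot]; rfl
      have hBL := ih SL (sub_ssubset hs0 _) s0.left (tree_sub hT hs0 hroot (Or.inl rfl))
        (fun c hc => hleaf c (leaf_transfer hT hs0 hroot (Or.inl rfl) c hc))
      have hBR := ih SR (sub_ssubset hs0 _) s0.right (tree_sub hT hs0 hroot (Or.inr rfl))
        (fun c hc => hleaf c (leaf_transfer hT hs0 hroot (Or.inr rfl) c hc))
      have htsum : ∀ f : Fin n → ℝ,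
          ∑ i ∈ t, f i = ∑ i ∈ s0.left, f i + ∑ i ∈ s0.right, f i := by
        intro f; rw [htu, Finset.sum_union s0.disjoint]
      refine ⟨by rw [htsum, hBL.1, hBR.1, add_zero], ?_⟩
      intro s hs
      by_cases h0 : s = s0
      · subst h0
        rw [htsum]
        have e1 : ∑ i ∈ s.left, stump s i * (y i - yhat i)
            = (s.right.card : ℝ) / Real.sqrt ((s.left.card : ℝ) * s.right.card)
              * ∑ i ∈ s.left, (y i - yhat i) := by
          rw [Finset.mul_sum]
          exact Finset.sum_congr rfl fun j hj => by rw [stump_left hj]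
        have e2 : ∑ i ∈ s.right, stump s i * (y i - yhat i)
            = -(s.left.card : ℝ) / Real.sqrt ((s.left.card : ℝ) * s.right.card)
              * ∑ i ∈ s.right, (y i - yhat i) := by
          rw [Finset.mul_sum]
          exact Finset.sum_congr rfl fun j hj => by rw [stump_right hj]
        rw [e1, e2, hBL.1, hBR.1]
        ring
      · have hmem : s ∈ SL ∪ SR := by
          rw [← hdec.1]; exact Finset.mem_erase.mpr ⟨h0, hs⟩
        rw [htsum]
        rcases Finset.mem_union.mp hmem with hsl | hsr
        · have hz : ∑ i ∈ s0.right, stump s i * (y i - yhat i) = 0 := by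
            refine Finset.sum_eq_zero fun i hi => ?_
            have hnot : i ∉ s.node := fun hmemn =>
              Finset.disjoint_right.mp s0.disjoint hi ((Finset.mem_filter.mp hsl).2 hmemn)
            rw [stump_zero hnot]; ring
          rw [hBL.2 s hsl, hz, add_zero]
        · have hz : ∑ i ∈ s0.left, stump s i * (y i - yhat i) = 0 := by
            refine Finset.sum_eq_zero fun i hi => ?_
            have hnot : i ∉ s.node := fun hmemn =>
              Finset.disjoint_left.mp s0.disjoint hi ((Finset.mem_filter.mp hsr).2 hmemn)
            rw [stump_zero hnot]; ring
          rw [hBR.2 s hsr, hz, zero_add]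

end CartAux

/-- **(CART = OLS on stump features.)** The CART predictions (leaf means) equal the orthogonal
projection of `y` onto the span of the all-ones vector together with the local decision stumps,
and are given explicitly by `ŷ = ȳ·1 + Σ_s (⟨ψ_s, y⟩ / ‖ψ_s‖²) ψ_s`. -/
theorem cart_eq_ols_on_stumps {n : ℕ} (S : Finset (Split n)) (hS : IsRootedTree S)
    (y : EuclideanSpace ℝ (Fin n)) (ybar : ℝ) (hybar : ybar = (∑ i, y i) / n)
    (yhat : EuclideanSpace ℝ (Fin n))
    (hyhat : ∀ t ∈ leafSet S, ∀ i ∈ t, yhat i = meanOn (fun j => y j) t) :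
    yhat = (Submodule.orthogonalProjection
        (Submodule.span ℝ (insert (ones n) (stump '' (↑S : Set (Split n))))) y :
          EuclideanSpace ℝ (Fin n)) ∧
    ∀ i, yhat i = ybar + ∑ s ∈ S,
      ((∑ j, stump s j * y j) / ∑ j, stump s j ^ 2) * stump s i := by
  classical
  have hT : CartAux.IsTreeOn Finset.univ S := by
    obtain ⟨hne, hinj, hex, hpar⟩ := hS
    exact ⟨hinj, fun s _ => Finset.subset_univ _, hpar, fun _ => hex⟩
  have hleaf : ∀ c, CartAux.IsLeafOf Finset.univ S c →
      ∀ i ∈ c, yhat i = meanOn (fun j => y j) c := by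
    intro c hc
    rcases hc with ⟨hSe, rfl⟩ | ⟨⟨s, hs, hchild⟩, hno⟩
    · exact absurd hSe (Finset.nonempty_iff_ne_empty.mp hS.1)
    · apply hyhat
      rw [leafSet, Finset.mem_filter, Finset.mem_union]
      refine ⟨?_, hno⟩
      rcases hchild with rfl | rfl
      · exact Or.inl (Finset.mem_image_of_mem _ hs)
      · exact Or.inr (Finset.mem_image_of_mem _ hs)
  have hm : meanOn (fun j => y j) Finset.univ = ybar := by
    rw [hybar, meanOn]; simp
  have h2 : ∀ i, yhat i = ybar + ∑ s ∈ S,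
      ((∑ j, stump s j * y j) / ∑ j, stump s j ^ 2) * stump s i := by
    intro i
    have h := CartAux.formulaA y yhat S Finset.univ hT hleaf i (Finset.mem_univ i)
    rw [h, hm]; rfl
  refine ⟨?_, h2⟩
  have hmem : yhat ∈ Submodule.span ℝ (insert (ones n) (stump '' (↑S : Set (Split n)))) := by
    have hy : yhat = ybar • ones n + ∑ s ∈ S, CartAux.coef y s • stump s := by
      ext i
      have happ : (∑ s ∈ S, CartAux.coef y s • stump s) i
          = ∑ s ∈ S, CartAux.coef y s * stump s i := by
        rw [WithLp.ofLp_sum, Finset.sum_apply]; rfl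
      show yhat i = ybar • ones n i + (∑ s ∈ S, CartAux.coef y s • stump s) i
      rw [happ, h2 i]
      simp [ones, CartAux.coef]
    rw [hy]
    exact Submodule.add_mem _
      (Submodule.smul_mem _ _ (Submodule.subset_span (Set.mem_insert _ _)))
      (Submodule.sum_mem _ fun s hs => Submodule.smul_mem _ _
        (Submodule.subset_span (Set.mem_insert_of_mem _ ⟨s, hs, rfl⟩)))
  have hB := CartAux.sumB y yhat S Finset.univ hT hleaf
  have hortho : ∀ w ∈ Submodule.span ℝ (insert (ones n) (stump '' (↑S : Set (Split n)))),
      ⟪y - yhat, w⟫ = 0 := by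
    intro w hw
    induction hw using Submodule.span_induction with
    | mem w hwmem =>
      rcases hwmem with rfl | ⟨s, hs, rfl⟩
      · have : ⟪y - yhat, ones n⟫ = ∑ i, (y i - yhat i) := by
          rw [PiLp.inner_apply]
          exact Finset.sum_congr rfl fun i _ => by
            simp [ones, RCLike.inner_apply, PiLp.sub_apply]
        rw [this]
        exact hB.1
      · have : ⟪y - yhat, stump s⟫ = ∑ i, stump s i * (y i - yhat i) := by
          rw [PiLp.inner_apply]
          exact Finset.sum_congr rfl fun i _ => by
            simp [RCLike.inner_apply, PiLp.sub_apply]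
        rw [this]
        exact hB.2 s hs
    | zero => exact inner_zero_right _
    | add u v _ _ hu hv => rw [inner_add_right, hu, hv, add_zero]
    | smul a u _ hu => rw [real_inner_smul_right, hu, mul_zero]
  exact (Submodule.eq_starProjection_of_mem_of_inner_eq_zero hmem hortho).symm
end
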